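/- Let φ: k[X,Y] → k[X,Y] be a k-algebra homomorphism with φ(X) = F, φ(Y) = G, and suppose det Jac(F,G) ∈ k*. Let (𝒰(t), 𝒱(t)) be the unique power series solution of F(𝒰,𝒱) = tX+(1-t)F, G(𝒰,𝒱) = tY+(1-t)G with 𝒰(0)=X, 𝒱(0)=Y. If 𝒰 and 𝒱 are polynomials in t and the k-algebra map τ defined by τ(X) = 𝒰(1), τ(Y) = 𝒱(1) satisfies φ∘τ = τ∘φ = id, then φ is an automorphism with inverse τ; conversely, if φ is an automorphism then φ∘τ = τ∘φ = id. -/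

import Mathlib

/-! The Jacobian condition makes the power series solution `(𝒰, 𝒱)` unique: if two solutions
agree modulo `t ^ n` with `n ≥ 1`, a first-order Taylor expansion shows that the Jacobian matrix,
evaluated at their common constant term `(X, Y)`, kills the coefficient of `t ^ n` of their
difference. If `φ` has an inverse `ψ`, composing `ψ` with the straight-line homotopy
`X ↦ tX + (1 - t)F, Y ↦ tY + (1 - t)G` gives a solution that is polynomial in `t` and starts at
`φ (ψ X) = X`, so it is `(𝒰, 𝒱)`; at `t = 1` it is `(ψ X, ψ Y)`, hence `τ = ψ`. -/

open MvPolynomial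

namespace MvPolynomial

variable {R σ : Type*} [CommRing R]

noncomputable def jacobian (F : σ → MvPolynomial σ R) : Matrix σ σ (MvPolynomial σ R) :=
  Matrix.of fun i j => pderiv j (F i)

theorem sum_aeval_pderiv_X_mul [Fintype σ] {S : Type*} [CommRing S] [Algebra R S]
    (f g : σ → S) (j : σ) : ∑ i, aeval f (pderiv i (X j : MvPolynomial σ R)) * g i = g j := by
  classical
  simp [Pi.single_apply]

theorem exists_aeval_add_mul_eq [Fintype σ] {S : Type*} [CommRing S] [Algebra R S]
    (f g : σ → S) (e : S) (P : MvPolynomial σ R) :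
    ∃ r : S, aeval (fun i => f i + e * g i) P =
      aeval f P + e * ∑ i, aeval f (pderiv i P) * g i + e ^ 2 * r := by
  induction P using MvPolynomial.induction_on with
  | C a => exact ⟨0, by simp⟩
  | add p q hp hq =>
    obtain ⟨rp, hp⟩ := hp
    obtain ⟨rq, hq⟩ := hq
    refine ⟨rp + rq, ?_⟩
    simp only [map_add, hp, hq, add_mul, Finset.sum_add_distrib]
    ring
  | mul_X p j hp =>
    obtain ⟨r, hp⟩ := hp
    refine ⟨(∑ i, aeval f (pderiv i p) * g i) * g j + r * (f j + e * g j), ?_⟩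
    have hsum : ∑ i, aeval f (pderiv i (p * X j)) * g i =
        (∑ i, aeval f (pderiv i p) * g i) * f j + aeval f p * g j := by
      simp only [Derivation.leibniz, smul_eq_mul, map_add, map_mul, aeval_X, add_mul,
        Finset.sum_add_distrib, mul_assoc, ← Finset.mul_sum, sum_aeval_pderiv_X_mul]
      ring
    rw [hsum, map_mul, map_mul, hp, aeval_X, aeval_X]
    ring

theorem constantCoeff_aeval {S : Type*} [CommRing S] [Algebra R S]
    (u : σ → PowerSeries S) (P : MvPolynomial σ R) :
    PowerSeries.constantCoeff (aeval u P) = aeval (fun i => PowerSeries.constantCoeff (u i)) P := by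
  induction P using MvPolynomial.induction_on with
  | C a => simp [PowerSeries.algebraMap_apply]
  | add p q hp hq => simp [hp, hq]
  | mul_X p j hp => simp [hp]

end MvPolynomial

section PowerSeriesSolution

variable {k R σ : Type*} [CommRing k] [CommRing R] [Algebra k R] [Fintype σ] [DecidableEq σ]

theorem constantCoeff_eq_zero_of_aeval_add_X_pow_mul_eq (F : σ → MvPolynomial σ k)
    (v a : σ → PowerSeries R) {n : ℕ} (hn : n ≠ 0)
    (hJ : IsUnit (aeval (fun i => PowerSeries.constantCoeff (v i)) (jacobian F).det))
    (h : ∀ j, aeval (fun i => v i + PowerSeries.X ^ n * a i) (F j) = aeval v (F j)) :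
    ∀ i, PowerSeries.constantCoeff (a i) = 0 := by
  set M := (aeval (fun i => PowerSeries.constantCoeff (v i))).mapMatrix (jacobian F)
  have hlin : M.mulVec (fun i => PowerSeries.constantCoeff (a i)) = 0 := by
    funext j
    obtain ⟨r, hr⟩ := exists_aeval_add_mul_eq v a (PowerSeries.X ^ n) (F j)
    have hcancel : PowerSeries.X ^ n * (∑ i, aeval v (pderiv i (F j)) * a i + PowerSeries.X ^ n * r)
        = PowerSeries.X ^ n * 0 := by
      linear_combination h j - hr
    have := congrArg PowerSeries.constantCoeff (PowerSeries.X_pow_mul_cancel hcancel)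
    rw [map_add, map_mul, map_pow, PowerSeries.constantCoeff_X, zero_pow hn, zero_mul, add_zero,
      map_sum, map_zero] at this
    simp only [map_mul, constantCoeff_aeval] at this
    simpa [M, jacobian, Matrix.mulVec, dotProduct] using this
  have hM : IsUnit M := by
    rw [Matrix.isUnit_iff_isUnit_det, ← AlgHom.map_det]
    exact hJ
  exact congrFun (Matrix.mulVec_injective_of_isUnit hM (hlin.trans (Matrix.mulVec_zero M).symm))

theorem eq_of_aeval_eq_of_constantCoeff_eq (F : σ → MvPolynomial σ k) (u v : σ → PowerSeries R)
    (h0 : ∀ i, PowerSeries.constantCoeff (u i) = PowerSeries.constantCoeff (v i))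
    (hJ : IsUnit (aeval (fun i => PowerSeries.constantCoeff (v i)) (jacobian F).det))
    (hF : ∀ j, aeval u (F j) = aeval v (F j)) : u = v := by
  have hdvd : ∀ n i, PowerSeries.X ^ (n + 1) ∣ u i - v i := by
    intro n
    induction n with
    | zero => simpa [PowerSeries.X_dvd_iff, sub_eq_zero] using h0
    | succ n ih =>
      choose a ha using ih
      have hu : u = fun i => v i + PowerSeries.X ^ (n + 1) * a i :=
        funext fun i => by rw [← ha]; ring
      have ha0 := constantCoeff_eq_zero_of_aeval_add_X_pow_mul_eq F v a n.succ_ne_zero hJ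
        (fun j => hu ▸ hF j)
      intro i
      rw [ha i, pow_succ]
      exact mul_dvd_mul_left _ (PowerSeries.X_dvd_iff.mpr (ha0 i))
  funext i
  ext n
  simpa [sub_eq_zero] using PowerSeries.X_pow_dvd_iff.mp (hdvd n i) n n.lt_succ_self

end PowerSeriesSolution

section Homotopy

variable {k σ : Type*} [CommRing k]

/-- The polynomial variable `Polynomial.X` plays the role of `t`. -/
noncomputable def straightLineHomotopy (φ : MvPolynomial σ k →ₐ[k] MvPolynomial σ k) :
    MvPolynomial σ k →ₐ[k] Polynomial (MvPolynomial σ k) :=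
  aeval fun i => Polynomial.X * Polynomial.C (X i) + (1 - Polynomial.X) * Polynomial.C (φ (X i))

variable (φ : MvPolynomial σ k →ₐ[k] MvPolynomial σ k)

theorem eval_zero_straightLineHomotopy (x : MvPolynomial σ k) :
    (straightLineHomotopy φ x).eval 0 = φ x := by
  have : ((Polynomial.aeval (0 : MvPolynomial σ k)).restrictScalars k).comp
      (straightLineHomotopy φ) = φ := by
    ext i
    simp [straightLineHomotopy]
  exact AlgHom.congr_fun this x

theorem eval_one_straightLineHomotopy (x : MvPolynomial σ k) :
    (straightLineHomotopy φ x).eval 1 = x := by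
  have : ((Polynomial.aeval (1 : MvPolynomial σ k)).restrictScalars k).comp
      (straightLineHomotopy φ) = AlgHom.id k _ := by
    ext i
    simp [straightLineHomotopy]
  exact AlgHom.congr_fun this x

theorem aeval_coe_straightLineHomotopy (ψ : MvPolynomial σ k →ₐ[k] MvPolynomial σ k)
    (x : MvPolynomial σ k) :
    aeval (fun i => (straightLineHomotopy φ (ψ (X i)) : PowerSeries (MvPolynomial σ k))) x =
      straightLineHomotopy φ (ψ x) := by
  have : aeval (fun i => (straightLineHomotopy φ (ψ (X i)) : PowerSeries (MvPolynomial σ k))) =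
      ((Polynomial.coeToPowerSeries.algHom (MvPolynomial σ k)).restrictScalars k).comp
        ((straightLineHomotopy φ).comp ψ) := by
    ext i
    simp
  exact AlgHom.congr_fun this x

theorem eq_coe_straightLineHomotopy_of_inverse [Fintype σ] [DecidableEq σ]
    (ψ : MvPolynomial σ k →ₐ[k] MvPolynomial σ k) (hψφ : Function.LeftInverse ψ φ)
    (hφψ : Function.RightInverse ψ φ) (hJ : IsUnit (jacobian fun i => φ (X i)).det)
    (u : σ → PowerSeries (MvPolynomial σ k)) (hu0 : ∀ i, PowerSeries.constantCoeff (u i) = X i)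
    (hu : ∀ i, aeval u (φ (X i)) =
      PowerSeries.X * PowerSeries.C (X i) + (1 - PowerSeries.X) * PowerSeries.C (φ (X i))) :
    u = fun i => (straightLineHomotopy φ (ψ (X i)) : PowerSeries (MvPolynomial σ k)) := by
  refine (eq_of_aeval_eq_of_constantCoeff_eq (fun i => φ (X i)) _ u (fun i => ?_) ?_
    (fun j => ?_)).symm
  · rw [← PowerSeries.coeff_zero_eq_constantCoeff_apply, Polynomial.coeff_coe,
      Polynomial.coeff_zero_eq_eval_zero, eval_zero_straightLineHomotopy, hφψ, hu0]
  · simpa [hu0] using hJ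
  · rw [aeval_coe_straightLineHomotopy, hψφ, hu]
    simp only [straightLineHomotopy, aeval_X, Polynomial.coe_add, Polynomial.coe_mul,
      Polynomial.coe_C, Polynomial.coe_X, Polynomial.coe_sub, Polynomial.coe_one]

end Homotopy

theorem stmt18_general (k : Type*) [Field k]
    (F G : MvPolynomial (Fin 2) k)
    (hJ : ∃ c : k, c ≠ 0 ∧
      Matrix.det !![pderiv 0 F, pderiv 1 F; pderiv 0 G, pderiv 1 G] = C c)
    (φ : MvPolynomial (Fin 2) k →ₐ[k] MvPolynomial (Fin 2) k)
    (hφX : φ (X 0) = F) (hφY : φ (X 1) = G)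
    (U V : PowerSeries (MvPolynomial (Fin 2) k))
    (hU0 : PowerSeries.constantCoeff U = X 0)
    (hV0 : PowerSeries.constantCoeff V = X 1)
    (hFs : aeval ![U, V] F =
      PowerSeries.X * PowerSeries.C (X 0) + (1 - PowerSeries.X) * PowerSeries.C F)
    (hGs : aeval ![U, V] G =
      PowerSeries.X * PowerSeries.C (X 1) + (1 - PowerSeries.X) * PowerSeries.C G) :
    ((∃ (p q : Polynomial (MvPolynomial (Fin 2) k))
        (τ : MvPolynomial (Fin 2) k →ₐ[k] MvPolynomial (Fin 2) k),
        U = (p : PowerSeries (MvPolynomial (Fin 2) k)) ∧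
        V = (q : PowerSeries (MvPolynomial (Fin 2) k)) ∧
        τ (X 0) = Polynomial.eval 1 p ∧ τ (X 1) = Polynomial.eval 1 q ∧
        φ.comp τ = AlgHom.id k (MvPolynomial (Fin 2) k) ∧
        τ.comp φ = AlgHom.id k (MvPolynomial (Fin 2) k)) →
      Function.Bijective φ) ∧
    (Function.Bijective φ →
      ∃ p q : Polynomial (MvPolynomial (Fin 2) k),
        U = (p : PowerSeries (MvPolynomial (Fin 2) k)) ∧
        V = (q : PowerSeries (MvPolynomial (Fin 2) k)) ∧
        ∀ τ : MvPolynomial (Fin 2) k →ₐ[k] MvPolynomial (Fin 2) k,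
          τ (X 0) = Polynomial.eval 1 p → τ (X 1) = Polynomial.eval 1 q →
          φ.comp τ = AlgHom.id k (MvPolynomial (Fin 2) k) ∧
          τ.comp φ = AlgHom.id k (MvPolynomial (Fin 2) k)) := by
  refine ⟨fun ⟨_, _, τ, _, _, _, _, hφτ, hτφ⟩ =>
    ⟨Function.LeftInverse.injective (AlgHom.congr_fun hτφ),
      Function.RightInverse.surjective (AlgHom.congr_fun hφτ)⟩, fun hφ => ?_⟩
  let e := AlgEquiv.ofBijective φ hφ
  have hφX' : (fun i => φ (X i)) = ![F, G] := by
    ext1 i; fin_cases i <;> simp [hφX, hφY]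
  have hJ' : IsUnit (jacobian fun i => φ (X i)).det := by
    obtain ⟨c, hc, hdet⟩ := hJ
    rw [hφX', Matrix.eta_fin_two (jacobian _)]
    simpa [jacobian, hdet] using hc
  have hUV := eq_coe_straightLineHomotopy_of_inverse φ e.symm
    e.symm_apply_apply e.apply_symm_apply
    hJ' ![U, V] (by simp [Fin.forall_fin_two, hU0, hV0])
    (by simp [Fin.forall_fin_two, hφX, hφY, hFs, hGs])
  refine ⟨_, _, congrFun hUV 0, congrFun hUV 1, fun τ hτX hτY => ?_⟩
  have hτψ : τ = e.symm := by
    refine algHom_ext fun i => ?_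
    fin_cases i
    · simpa [eval_one_straightLineHomotopy] using hτX
    · simpa [eval_one_straightLineHomotopy] using hτY
  subst hτψ
  exact ⟨AlgHom.ext e.apply_symm_apply, AlgHom.ext e.symm_apply_apply⟩

/-- Given `φ(X)=F`, `φ(Y)=G` with `det Jac(F,G) ∈ k*`, and `(𝒰,𝒱)` the unique power
series solution of the deformed system: if `𝒰, 𝒱` are polynomials in `t` and the map
`τ` with `τ(X)=𝒰(1)`, `τ(Y)=𝒱(1)` satisfies `φ∘τ = τ∘φ = id`, then `φ` is an
automorphism with inverse `τ`; conversely, if `φ` is an automorphism then `𝒰, 𝒱` are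
polynomial in `t` and any such `τ` satisfies `φ∘τ = τ∘φ = id`. -/
theorem stmt18 (k : Type*) [Field k] [CharZero k]
    (F G : MvPolynomial (Fin 2) k)
    (hJ : ∃ c : k, c ≠ 0 ∧
      Matrix.det !![pderiv 0 F, pderiv 1 F; pderiv 0 G, pderiv 1 G] = C c)
    (φ : MvPolynomial (Fin 2) k →ₐ[k] MvPolynomial (Fin 2) k)
    (hφX : φ (X 0) = F) (hφY : φ (X 1) = G)
    (U V : PowerSeries (MvPolynomial (Fin 2) k))
    (hU0 : PowerSeries.constantCoeff U = X 0)
    (hV0 : PowerSeries.constantCoeff V = X 1)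
    (hFs : aeval ![U, V] F =
      PowerSeries.X * PowerSeries.C (X 0) + (1 - PowerSeries.X) * PowerSeries.C F)
    (hGs : aeval ![U, V] G =
      PowerSeries.X * PowerSeries.C (X 1) + (1 - PowerSeries.X) * PowerSeries.C G) :
    ((∃ (p q : Polynomial (MvPolynomial (Fin 2) k))
        (τ : MvPolynomial (Fin 2) k →ₐ[k] MvPolynomial (Fin 2) k),
        U = (p : PowerSeries (MvPolynomial (Fin 2) k)) ∧
        V = (q : PowerSeries (MvPolynomial (Fin 2) k)) ∧
        τ (X 0) = Polynomial.eval 1 p ∧ τ (X 1) = Polynomial.eval 1 q ∧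
        φ.comp τ = AlgHom.id k (MvPolynomial (Fin 2) k) ∧
        τ.comp φ = AlgHom.id k (MvPolynomial (Fin 2) k)) →
      Function.Bijective φ) ∧
    (Function.Bijective φ →
      ∃ p q : Polynomial (MvPolynomial (Fin 2) k),
        U = (p : PowerSeries (MvPolynomial (Fin 2) k)) ∧
        V = (q : PowerSeries (MvPolynomial (Fin 2) k)) ∧
        ∀ τ : MvPolynomial (Fin 2) k →ₐ[k] MvPolynomial (Fin 2) k,
          τ (X 0) = Polynomial.eval 1 p → τ (X 1) = Polynomial.eval 1 q →
          φ.comp τ = AlgHom.id k (MvPolynomial (Fin 2) k) ∧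
          τ.comp φ = AlgHom.id k (MvPolynomial (Fin 2) k)) :=
  stmt18_general k F G hJ φ hφX hφY U V hU0 hV0 hFs hGs
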